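/- Let l ≥ 1, let A be a real (2l)×(2l) matrix with Aᵀ·A = 1 and det A = 1, and let c ∈ ℝ. Then √(det(1 − e^c·A) · det(1 − e^{−c}·A)) = ∑_{j=0}^{2l} (−1)^j · Tr(Λ^j A) · e^{(l−j)c}, where A is regarded as a linear endomorphism of ℝ^{2l}, Λ^j A denotes the induced endomorphism of the j-th exterior power of ℝ^{2l}, and √ is the nonnegative real square root. -/

import Mathlib

/-!
Expanding `det (1 + r • M)` in principal minors and reading the minors of size `j` as the
diagonal of `Λ^j A` in the standard basis gives `det (1 - r • A) = ∑ⱼ (-r)^j Tr (Λ^j A)`.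
For `A ∈ SO(2l)`, `det (1 - t • A) = t^(2l) det (1 - t⁻¹ • A)`, so the radicand is the square of
`e^(lc) det (1 - e^(-c) • A)`, and it remains to see `det (1 - r • A) ≥ 0` for `r > 0`. Since `A`
is an isometry, `r ↦ det (1 - r • A)` vanishes on `(0, ∞)` only at `r = 1`; it is positive at
`r = 0`, so it cannot be negative on `(0, 1)`, nor, by the symmetry `r ↔ r⁻¹`, on `(1, ∞)`.
-/

open Matrix ExteriorAlgebra

/-- The endomorphism induced by a linear map `f : M →ₗ[R] N` on the `n`-th exterior powers,
obtained by restricting the algebra morphism `ExteriorAlgebra.map f`. -/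
noncomputable def exteriorPowerMap {R M N : Type*} [CommRing R]
    [AddCommGroup M] [Module R M] [AddCommGroup N] [Module R N]
    (n : ℕ) (f : M →ₗ[R] N) : ⋀[R]^n M →ₗ[R] ⋀[R]^n N :=
  (ExteriorAlgebra.map f).toLinearMap.restrict (p := ⋀[R]^n M) (q := ⋀[R]^n N)
    (fun x hx => by
      have h : Submodule.map (ExteriorAlgebra.map f).toLinearMap (⋀[R]^n M) ≤ ⋀[R]^n N := by
        rw [show (⋀[R]^n M : Submodule R (ExteriorAlgebra R M)) =
              LinearMap.range (ι R (M := M)) ^ n from rfl,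
          Submodule.map_pow, ExteriorAlgebra.ι_range_map_map]
        exact pow_le_pow_left' (LinearMap.map_le_range) n
      exact h (Submodule.mem_map_of_mem hx))

theorem exteriorPowerMap_eq_map {R M N : Type*} [CommRing R] [AddCommGroup M] [Module R M]
    [AddCommGroup N] [Module R N] (n : ℕ) (f : M →ₗ[R] N) :
    exteriorPowerMap n f = exteriorPower.map n f := by
  ext v
  simp [exteriorPowerMap, Function.comp_def]

namespace Matrix

open Polynomial in
theorem det_one_add_smul_eq_sum_minors {n R : Type*} [Fintype n] [DecidableEq n] [CommRing R]
    (M : Matrix n n R) (r : R) :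
    det (1 + r • M) = ∑ k ∈ Finset.range (Fintype.card n + 1),
      r ^ k * ∑ s ∈ Finset.univ.powersetCard k,
        (M.submatrix (Subtype.val : s → n) Subtype.val).det := by
  have hdeg : (det (1 + (X : R[X]) • M.map C)).natDegree < Fintype.card n + 1 := by
    rw [add_comm, ← Matrix.map_one C (map_zero C) (map_one C)]
    exact Nat.lt_succ_of_le (natDegree_det_X_add_C_le M 1)
  have heval : (det (1 + (X : R[X]) • M.map C)).eval r = det (1 + r • M) := by
    simp [eval_det, ← smul_eq_mul_diagonal]
  rw [← heval, eval_eq_sum_range' hdeg]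
  simp_rw [coeff_det_one_add_X_smul_eq_sum_minors, mul_comm]

theorem det_submatrix_orderEmbOfFin {ι R : Type*} [LinearOrder ι] [CommRing R]
    (A : Matrix ι ι R) (s : Finset ι) {k : ℕ} (hs : s.card = k) :
    (A.submatrix (s.orderEmbOfFin hs) (s.orderEmbOfFin hs)).det =
      (A.submatrix (Subtype.val : s → ι) Subtype.val).det := by
  rw [← det_submatrix_equiv_self (s.orderIsoOfFin hs).toEquiv, submatrix_submatrix]
  rfl

section ExteriorPower

variable {ι R : Type*} [Fintype ι] [LinearOrder ι] [CommRing R]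

theorem trace_exteriorPower_map_toLin' (A : Matrix ι ι R) (k : ℕ) :
    LinearMap.trace R (⋀[R]^k (ι → R)) (exteriorPower.map k (toLin' A)) =
      ∑ s ∈ Finset.univ.powersetCard k, (A.submatrix (Subtype.val : s → ι) Subtype.val).det := by
  let b := (Pi.basisFun R ι).exteriorPower k
  have hdiag : ∀ s, LinearMap.toMatrix b b (exteriorPower.map k (toLin' A)) s s =
      (A.submatrix (s.1.orderEmbOfFin s.2) (s.1.orderEmbOfFin s.2)).det := by
    intro s
    rw [LinearMap.toMatrix_apply, exteriorPower.basis_apply,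
      exteriorPower.map_apply_ιMulti_family, exteriorPower.basis_repr_apply,
      exteriorPower.ιMulti_family, exteriorPower.ιMultiDual_apply_ιMulti, ← det_transpose]
    congr 1
    ext i j
    simp [toLin'_apply, mulVec_single, Set.powersetCard.ofFinEmbEquiv_symm_apply]
  rw [LinearMap.trace_eq_matrix_trace R b, trace]
  simp only [diag, hdiag]
  rw [Finset.sum_subtype (Finset.univ.powersetCard k) (p := (· ∈ Set.powersetCard ι k))
    (F := inferInstanceAs (Fintype (Set.powersetCard ι k))) (by simp [Set.powersetCard.mem_iff])]
  exact Finset.sum_congr rfl fun s _ => A.det_submatrix_orderEmbOfFin s.1 s.2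

theorem det_one_sub_smul_eq_sum_trace_exteriorPower_map (A : Matrix ι ι R) (r : R) :
    det (1 - r • A) = ∑ k ∈ Finset.range (Fintype.card ι + 1),
      (-r) ^ k * LinearMap.trace R (⋀[R]^k (ι → R)) (exteriorPower.map k (toLin' A)) := by
  rw [sub_eq_add_neg, ← neg_smul, det_one_add_smul_eq_sum_minors]
  simp_rw [trace_exteriorPower_map_toLin']

end ExteriorPower

section Orthogonal

variable {n : Type*} [Fintype n] [DecidableEq n]

theorem det_one_sub_smul_eq_neg_pow_mul_det_one_sub_inv_smul {K : Type*} [Field K]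
    {A : Matrix n n K} (hA : Aᵀ * A = 1) (hdet : A.det = 1) {t : K} (ht : t ≠ 0) :
    det (1 - t • A) = (-t) ^ Fintype.card n * det (1 - t⁻¹ • A) := by
  calc det (1 - t • A) = det (Aᵀ * (1 - t • A)) := by rw [det_mul, det_transpose, hdet, one_mul]
    _ = det (Aᵀ - t • 1) := by rw [mul_sub, mul_one, Matrix.mul_smul, hA]
    _ = det ((-t) • (1 - t⁻¹ • A))ᵀ := by
      simp [smul_smul, ht, sub_eq_neg_add, add_comm]
    _ = (-t) ^ Fintype.card n * det (1 - t⁻¹ • A) := by rw [det_transpose, det_smul]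

theorem eq_one_of_det_one_sub_smul_eq_zero {A : Matrix n n ℝ} (hA : Aᵀ * A = 1) {r : ℝ}
    (hr : 0 < r) (h : det (1 - r • A) = 0) : r = 1 := by
  obtain ⟨v, hv, hker⟩ := exists_mulVec_eq_zero_iff.mpr h
  have hfix : v = r • (A *ᵥ v) := by
    rwa [sub_mulVec, one_mulVec, smul_mulVec, sub_eq_zero] at hker
  have hisom : (A *ᵥ v) ⬝ᵥ (A *ᵥ v) = v ⬝ᵥ v := by
    rw [dotProduct_mulVec, ← vecMul_transpose, vecMul_vecMul, hA, vecMul_one]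
  have hvv : v ⬝ᵥ v ≠ 0 := fun h0 => hv (dotProduct_self_eq_zero.mp h0)
  have hr2 : r ^ 2 = 1 := by
    refine mul_right_cancel₀ hvv ?_
    conv_rhs => rw [hfix]
    rw [smul_dotProduct, dotProduct_smul, hisom, smul_smul, smul_eq_mul, one_mul, sq]
  nlinarith

theorem one_lt_of_det_one_sub_smul_neg {A : Matrix n n ℝ} (hA : Aᵀ * A = 1) {r : ℝ}
    (hr : 0 < r) (h : det (1 - r • A) < 0) : 1 < r := by
  have hcont : Continuous fun t : ℝ => det (1 - t • A) := by fun_prop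
  obtain ⟨x, hx, hx0⟩ := intermediate_value_Icc' hr.le hcont.continuousOn
    ⟨h.le, by simp⟩
  have hxpos : 0 < x := hx.1.lt_of_ne (by rintro rfl; simp at hx0)
  obtain rfl := eq_one_of_det_one_sub_smul_eq_zero hA hxpos hx0
  exact hx.2.lt_of_ne (by rintro rfl; exact h.ne hx0)

theorem det_one_sub_smul_nonneg {A : Matrix n n ℝ} (hA : Aᵀ * A = 1) (hdet : A.det = 1)
    (hn : Even (Fintype.card n)) {r : ℝ} (hr : 0 < r) : 0 ≤ det (1 - r • A) := by
  by_contra! hneg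
  have hinv : det (1 - r⁻¹ • A) < 0 := by
    rw [det_one_sub_smul_eq_neg_pow_mul_det_one_sub_inv_smul hA hdet (inv_ne_zero hr.ne'),
      inv_inv, hn.neg_pow]
    exact mul_neg_of_pos_of_neg (by positivity) hneg
  have h1 := one_lt_of_det_one_sub_smul_neg hA hr hneg
  have h2 := one_lt_of_det_one_sub_smul_neg hA (inv_pos.mpr hr) hinv
  exact (one_lt_inv₀ hr).mp h2 |>.not_gt h1

end Orthogonal

end Matrix

theorem sqrt_det_eq_alternating_sum_trace_exterior_general
    (l : ℕ) (A : Matrix (Fin (2 * l)) (Fin (2 * l)) ℝ)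
    (hA : Aᵀ * A = 1) (hdet : A.det = 1) (c : ℝ) :
    Real.sqrt (((1 : Matrix (Fin (2 * l)) (Fin (2 * l)) ℝ) - Real.exp c • A).det *
        ((1 : Matrix (Fin (2 * l)) (Fin (2 * l)) ℝ) - Real.exp (-c) • A).det) =
    ∑ j ∈ Finset.range (2 * l + 1),
      (-1 : ℝ) ^ j *
        LinearMap.trace ℝ (⋀[ℝ]^j (Fin (2 * l) → ℝ))
          (exteriorPowerMap j (Matrix.toLin' A)) *
        Real.exp (((l : ℝ) - (j : ℝ)) * c) := by
  have hexpand := det_one_sub_smul_eq_sum_trace_exteriorPower_map A (Real.exp (-c))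
  set d := ((1 : Matrix (Fin (2 * l)) (Fin (2 * l)) ℝ) - Real.exp (-c) • A).det
  have hd : 0 ≤ d := det_one_sub_smul_nonneg hA hdet (by simp) (Real.exp_pos _)
  have hsymm : ((1 : Matrix (Fin (2 * l)) (Fin (2 * l)) ℝ) - Real.exp c • A).det =
      Real.exp c ^ (2 * l) * d := by
    rw [det_one_sub_smul_eq_neg_pow_mul_det_one_sub_inv_smul hA hdet (Real.exp_pos c).ne',
      ← Real.exp_neg, Fintype.card_fin, (even_two_mul l).neg_pow]
  rw [hsymm, show Real.exp c ^ (2 * l) * d * d = (Real.exp c ^ l * d) ^ 2 by ring,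
    Real.sqrt_sq (by positivity), hexpand, Fintype.card_fin, Finset.mul_sum]
  refine Finset.sum_congr rfl fun j _ => ?_
  rw [exteriorPowerMap_eq_map, show ((l : ℝ) - j) * c = l * c + j * -c by ring, Real.exp_add,
    Real.exp_nat_mul, Real.exp_nat_mul, neg_pow]
  ring

/-- For a special orthogonal real matrix `A` of even size `2l` and `c ∈ ℝ`:
`√(det(1 − e^c A) · det(1 − e^{−c} A)) = ∑_{j=0}^{2l} (−1)^j Tr(Λ^j A) e^{(l−j)c}`. -/
theorem sqrt_det_eq_alternating_sum_trace_exterior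
    (l : ℕ) (hl : 1 ≤ l) (A : Matrix (Fin (2 * l)) (Fin (2 * l)) ℝ)
    (hA : Aᵀ * A = 1) (hdet : A.det = 1) (c : ℝ) :
    Real.sqrt (((1 : Matrix (Fin (2 * l)) (Fin (2 * l)) ℝ) - Real.exp c • A).det *
        ((1 : Matrix (Fin (2 * l)) (Fin (2 * l)) ℝ) - Real.exp (-c) • A).det) =
    ∑ j ∈ Finset.range (2 * l + 1),
      (-1 : ℝ) ^ j *
        LinearMap.trace ℝ (⋀[ℝ]^j (Fin (2 * l) → ℝ))
          (exteriorPowerMap j (Matrix.toLin' A)) *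
        Real.exp (((l : ℝ) - (j : ℝ)) * c) :=
  sqrt_det_eq_alternating_sum_trace_exterior_general l A hA hdet c
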